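/- arXiv:1611.06460 — 4 statements merged into one kernel-verified Lean document; each statement's English description precedes it below -/
import Mathlib

section
/- If G is a connected graph with a t-split graph G^t, and T is an h-vertex-cut of G, then the set T^t = ∪_{u∈T} V_u is an h-vertex-cut of G^t; consequently κ_s^{(h)}(G^t) ≤ t·κ_s^{(h)}(G). -/
/-!
The projection `π : G^t → G` maps the neighbourhood of each vertex `x` bijectively onto that of
`π x` (existence and uniqueness in the perfect matchings). Hence a vertex of `G^t - T^t` has exactly
as many neighbours there as its image has in `G - T`, and `π` is a surjective homomorphism from
`G^t - T^t` onto `G - T`, so connectedness of the former would force that of the latter.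
Counting fibres gives `|T^t| = t |T|`, and applying this to a minimum `h`-vertex-cut of `G`
bounds `κ_s^{(h)}(G^t)`.
-/
open SimpleGraph

/-- `q` is a swap-neighbor of `p` in the (n,k)-star graph: it is obtained from `p`
by swapping the first digit with the `i`-th digit for some `i ≠ 0`. -/
def swapAdj {n k : ℕ} [NeZero k] (p q : Fin k ↪ Fin n) : Prop :=
  ∃ i : Fin k, i ≠ 0 ∧ q 0 = p i ∧ q i = p 0 ∧
    ∀ j : Fin k, j ≠ 0 → j ≠ i → q j = p j

/-- `q` is an unswap-neighbor of `p`: obtained by replacing the first digit of `p`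
by a symbol not occurring in `p`. -/
def unswapAdj {n k : ℕ} [NeZero k] (p q : Fin k ↪ Fin n) : Prop :=
  (∀ j : Fin k, j ≠ 0 → q j = p j) ∧ ∀ j : Fin k, q 0 ≠ p j

/-- The (n,k)-star graph `S_{n,k}` on the k-arrangements of an n-set. -/
def nkStar (n k : ℕ) [NeZero k] : SimpleGraph (Fin k ↪ Fin n) :=
  SimpleGraph.fromRel (fun p q => swapAdj p q ∨ unswapAdj p q)

/-- The n-dimensional star graph `S_n` on permutations, adjacency by swapping the
first digit with the `i`-th digit, `i ≠ 0`. -/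
def starGraph (n : ℕ) [NeZero n] : SimpleGraph (Equiv.Perm (Fin n)) :=
  SimpleGraph.fromRel (fun p q => ∃ i : Fin n, i ≠ 0 ∧ q = p * Equiv.swap 0 i)

/-- `T` is an h-vertex-cut: `G - T` is disconnected and has minimum degree at least `h`. -/
def IsHVertexCut {V : Type*} (G : SimpleGraph V) (h : ℕ) (T : Set V) : Prop :=
  ¬ (G.induce Tᶜ).Connected ∧ ∀ v, v ∉ T → h ≤ (G.neighborSet v \ T).ncard

/-- The h-super connectivity `κ_s^{(h)}(G)`. -/
noncomputable def kappaS {V : Type*} (G : SimpleGraph V) (h : ℕ) : ℕ :=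
  sInf {m | ∃ T : Set V, IsHVertexCut G h T ∧ T.ncard = m}

/-- `F` is an h-edge-cut: `G - F` is disconnected and has minimum degree at least `h`. -/
def IsHEdgeCut {V : Type*} (G : SimpleGraph V) (h : ℕ) (F : Set (Sym2 V)) : Prop :=
  F ⊆ G.edgeSet ∧ ¬ (G.deleteEdges F).Connected ∧
    ∀ v : V, h ≤ ((G.deleteEdges F).neighborSet v).ncard

/-- The h-super edge-connectivity `λ_s^{(h)}(G)`. -/
noncomputable def lambdaS {V : Type*} (G : SimpleGraph V) (h : ℕ) : ℕ :=
  sInf {m | ∃ F : Set (Sym2 V), IsHEdgeCut G h F ∧ F.ncard = m}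

/-- `G'` together with the projection `π` is a `t`-split graph of `G`: fibers of `π`
have size `t` and are independent, `π` is a graph homomorphism, and over each edge of
`G` the edges of `G'` form a perfect matching between the two fibers. -/
structure IsSplitGraph {V W : Type*} (G : SimpleGraph V) (t : ℕ)
    (G' : SimpleGraph W) (π : W → V) : Prop where
  fiber_card : ∀ v : V, Nat.card (π ⁻¹' {v}) = t
  indep : ∀ x y : W, π x = π y → ¬ G'.Adj x y
  adj_map : ∀ x y : W, G'.Adj x y → G.Adj (π x) (π y)
  matching : ∀ (x : W) (v : V), G.Adj (π x) v → ∃! z : W, π z = v ∧ G'.Adj x z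

/-- The prefix map sending a permutation of `{1,...,n}` to its length-`k` prefix. -/
def prefixMap (n k : ℕ) (hkn : k ≤ n) (p : Equiv.Perm (Fin n)) : Fin k ↪ Fin n :=
  (Fin.castLEEmb hkn).trans p.toEmbedding

/-- The set `X` of k-arrangements whose last `n-1-h` digits are `1,2,...,n-1-h` in order. -/
def lastFixed (n k h : ℕ) : Set (Fin k ↪ Fin n) :=
  {u | ∀ i : Fin k, k - (n - 1 - h) ≤ i.val → (u i).val = i.val - (k - (n - 1 - h))}

open Set

namespace IsSplitGraph

variable {V W : Type*} {G : SimpleGraph V} {t : ℕ} {G' : SimpleGraph W} {π : W → V}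

theorem bijOn_neighborSet (hs : IsSplitGraph G t G' π) (x : W) :
    BijOn π (G'.neighborSet x) (G.neighborSet (π x)) := by
  refine ⟨fun y hy => hs.adj_map x y hy, fun y hy z hz hyz => ?_, fun v hv => ?_⟩
  · obtain ⟨w, -, huniq⟩ := hs.matching x (π y) (hs.adj_map x y hy)
    exact (huniq y ⟨rfl, hy⟩).trans (huniq z ⟨hyz.symm, hz⟩).symm
  · obtain ⟨z, ⟨hzv, hz⟩, -⟩ := hs.matching x v hv
    exact ⟨z, hz, hzv⟩

theorem ncard_neighborSet_diff_preimage (hs : IsSplitGraph G t G' π) (x : W) (T : Set V) :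
    (G'.neighborSet x \ π ⁻¹' T).ncard = (G.neighborSet (π x) \ T).ncard := by
  have hbij := (hs.bijOn_neighborSet x).subset_right (sdiff_subset (t := T))
  rw [← hbij.ncard_eq]
  congr 1
  ext y
  exact ⟨fun ⟨hy, hyT⟩ => ⟨hy, hs.adj_map x y hy, hyT⟩, fun ⟨hy, _, hyT⟩ => ⟨hy, hyT⟩⟩

theorem pos [Finite W] (hs : IsSplitGraph G t G' π) (w : W) : 0 < t := by
  rw [← hs.fiber_card (π w)]
  have : Nonempty (π ⁻¹' {π w}) := ⟨⟨w, rfl⟩⟩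
  exact Nat.card_pos

theorem surjective [Finite W] (hs : IsSplitGraph G t G' π) (ht : 0 < t) :
    Function.Surjective π := by
  intro v
  rw [← hs.fiber_card v, Nat.card_pos_iff] at ht
  obtain ⟨⟨x, hx⟩⟩ := ht.1
  exact ⟨x, hx⟩

theorem ncard_preimage [Finite V] [Finite W] (hs : IsSplitGraph G t G' π) (S : Set V) :
    (π ⁻¹' S).ncard = t * S.ncard := by
  rw [← biUnion_preimage_singleton, (toFinite S).ncard_biUnion (fun _ _ => toFinite _)
    (fun _ _ _ _ hne => disjoint_singleton.2 hne |>.preimage π)]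
  have hfib (v : V) : (π ⁻¹' {v}).ncard = t :=
    (Nat.card_coe_set_eq _).symm.trans (hs.fiber_card v)
  rw [finsum_mem_congr rfl fun v _ => hfib v, finsum_mem_eq_finite_toFinset_sum _ (toFinite S),
    Finset.sum_const, smul_eq_mul, ← ncard_eq_toFinset_card S, mul_comm]

theorem not_connected_induce_compl_preimage [Finite W] (hs : IsSplitGraph G t G' π) {T : Set V}
    (hT : ¬ (G.induce Tᶜ).Connected) : ¬ (G'.induce (π ⁻¹' T)ᶜ).Connected := by
  intro hc
  obtain ⟨⟨w, -⟩⟩ := hc.nonempty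
  let f : G'.induce (π ⁻¹' T)ᶜ →g G.induce Tᶜ :=
    { toFun := fun x => ⟨π x, x.2⟩
      map_rel' := fun {a b} hab => hs.adj_map a b hab }
  refine hT (hc.map f fun v => ?_)
  obtain ⟨x, hx⟩ := hs.surjective (hs.pos w) v
  exact ⟨⟨x, show π x ∈ Tᶜ from hx ▸ v.2⟩, Subtype.ext hx⟩

theorem isHVertexCut_preimage [Finite W] (hs : IsSplitGraph G t G' π) {h : ℕ} {T : Set V}
    (hT : IsHVertexCut G h T) : IsHVertexCut G' h (π ⁻¹' T) :=
  ⟨hs.not_connected_induce_compl_preimage hT.1, fun x hx =>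
    (hs.ncard_neighborSet_diff_preimage x T).symm ▸ hT.2 (π x) hx⟩

end IsSplitGraph

theorem exists_isHVertexCut_ncard_eq_kappaS {V : Type*} {G : SimpleGraph V} {h : ℕ} {T : Set V}
    (hT : IsHVertexCut G h T) : ∃ T₀, IsHVertexCut G h T₀ ∧ T₀.ncard = kappaS G h :=
  Nat.sInf_mem (s := {m | ∃ T, IsHVertexCut G h T ∧ T.ncard = m}) ⟨_, T, hT, rfl⟩

theorem kappaS_le_ncard {V : Type*} {G : SimpleGraph V} {h : ℕ} {T : Set V}
    (hT : IsHVertexCut G h T) : kappaS G h ≤ T.ncard :=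
  Nat.sInf_le ⟨T, hT, rfl⟩

theorem split_vertex_cut_general {V W : Type*} [Fintype V] [Fintype W]
    (G : SimpleGraph V) (t h : ℕ) (G' : SimpleGraph W) (π : W → V)
    (hsplit : IsSplitGraph G t G' π)
    (T : Set V) (hT : IsHVertexCut G h T) :
    IsHVertexCut G' h (π ⁻¹' T) ∧ kappaS G' h ≤ t * kappaS G h := by
  obtain ⟨T₀, hT₀, hcard⟩ := exists_isHVertexCut_ncard_eq_kappaS hT
  refine ⟨hsplit.isHVertexCut_preimage hT, ?_⟩
  calc kappaS G' h ≤ (π ⁻¹' T₀).ncard := kappaS_le_ncard (hsplit.isHVertexCut_preimage hT₀)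
    _ = t * kappaS G h := by rw [hsplit.ncard_preimage, hcard]

/-- preimages of h-vertex-cuts are h-vertex-cuts of a t-split graph;
consequently κ_s^{(h)}(G^t) ≤ t·κ_s^{(h)}(G). -/
theorem split_vertex_cut {V W : Type*} [Fintype V] [Fintype W]
    (G : SimpleGraph V) (t h : ℕ) (G' : SimpleGraph W) (π : W → V)
    (hsplit : IsSplitGraph G t G' π) (hconn : G.Connected)
    (T : Set V) (hT : IsHVertexCut G h T) :
    IsHVertexCut G' h (π ⁻¹' T) ∧ kappaS G' h ≤ t * kappaS G h :=
  split_vertex_cut_general G t h G' π hsplit T hT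
end

section
/- For 2 ≤ k ≤ n−1, there is an (n−k)!-split graph of the (n,k)-star graph S_{n,k} isomorphic to the star graph S_n. Concretely: the map sending a permutation p_1...p_n of {1,...,n} to its prefix p_1...p_k is a graph homomorphism from S_n onto S_{n,k} whose fibers V_u each have size (n−k)!, are independent sets in S_n, and such that for each edge uv of S_{n,k} the edges of S_n between V_u and V_v form a perfect matching. -/
/-!
In `S_n`, swapping positions `0` and `i` of `x` is the same as applying the transposition of
symbols `(x 0, x i)` on the left. Both kinds of edge of `S_{n,k}` are of this form too: `v` is
adjacent to `u` exactly when `v 0 ≠ u 0` and `v = (u 0, v 0) • u` (a swap if `v 0` occurs in `u`,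
a replacement otherwise). Since the prefix map is equivariant for the left action of `Perm (Fin n)`,
it sends edges to edges, and over an edge `u v` the unique neighbour of `x` above `v` is
`(x 0, v 0) * x`. Each fibre is a coset of the pointwise stabiliser of the first `k` positions,
which is the permutation group of the remaining `n - k` positions.
-/

open SimpleGraph

open Equiv Function

theorem Equiv.Perm.card_smul_embedding_eq {ι α : Type*} [Finite ι] [Finite α]
    (c u : ι ↪ α) : Nat.card {σ : Perm α // σ • c = u} = (Nat.card α - Nat.card ι).factorial := by
  classical
  have := Fintype.ofFinite ι
  have := Fintype.ofFinite α
  obtain ⟨σ₀, rfl⟩ := exists_smul_eq_embedding c u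
  have e : {σ : Perm α // σ • c = σ₀ • c} ≃ Perm {a // a ∉ Set.range c} :=
    calc {σ : Perm α // σ • c = σ₀ • c}
        ≃ {σ : Perm α // ∀ a, ¬ a ∉ Set.range c → σ a = a} :=
          (Equiv.mulLeft σ₀⁻¹).subtypeEquiv fun σ => by
            simp [Embedding.ext_iff, Embedding.smul_apply, Equiv.symm_apply_eq]
      _ ≃ Perm {a // a ∉ Set.range c} := (Perm.subtypeEquivSubtypePerm _).symm
  rw [Nat.card_congr e, Nat.card_perm, Nat.card_eq_fintype_card, Fintype.card_subtype_compl,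
    Fintype.card_range, Nat.card_eq_fintype_card, Nat.card_eq_fintype_card]

theorem starGraph_adj_iff {n : ℕ} [NeZero n] {x y : Perm (Fin n)} :
    (_root_.starGraph n).Adj x y ↔ y 0 ≠ x 0 ∧ y = swap (x 0) (y 0) * x := by
  have mul_swap_apply_zero : ∀ z : Perm (Fin n), ∀ i, (z * swap 0 i) 0 = z i := fun z i => by
    rw [Perm.mul_apply, swap_apply_left]
  rw [_root_.starGraph, fromRel_adj]
  constructor
  · rintro ⟨-, ⟨i, hi, rfl⟩ | ⟨i, hi, rfl⟩⟩
    · rw [mul_swap_apply_zero]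
      exact ⟨x.injective.ne hi, mul_swap_eq_swap_mul x 0 i⟩
    · rw [mul_swap_apply_zero, swap_comm, ← mul_assoc, ← mul_swap_eq_swap_mul, mul_assoc,
        swap_mul_self, mul_one]
      exact ⟨y.injective.ne hi.symm, rfl⟩
  · rintro ⟨h0, hy⟩
    refine ⟨fun h => h0 (h ▸ rfl), Or.inl ⟨x.symm (y 0), fun h => h0 (x.symm_apply_eq.1 h), ?_⟩⟩
    rw [mul_swap_eq_swap_mul, apply_symm_apply]
    exact hy

section nkStar

variable {n k : ℕ} [NeZero k] {u v : Fin k ↪ Fin n}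

theorem swapAdj.eq_swap_smul (h : swapAdj u v) : v = swap (u 0) (v 0) • u := by
  obtain ⟨i, hi, hv0, hvi, hvj⟩ := h
  ext j
  rw [Embedding.smul_apply, Perm.smul_def, hv0]
  rcases eq_or_ne j 0 with rfl | hj0
  · rw [swap_apply_left, hv0]
  rcases eq_or_ne j i with rfl | hji
  · rw [swap_apply_right, hvi]
  · rw [swap_apply_of_ne_of_ne (u.injective.ne hj0) (u.injective.ne hji), hvj j hj0 hji]

theorem unswapAdj.eq_swap_smul (h : unswapAdj u v) : v = swap (u 0) (v 0) • u := by
  obtain ⟨hvj, hv0⟩ := h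
  ext j
  rw [Embedding.smul_apply, Perm.smul_def]
  rcases eq_or_ne j 0 with rfl | hj0
  · rw [swap_apply_left]
  · rw [swap_apply_of_ne_of_ne (u.injective.ne hj0) (hv0 j).symm, hvj j hj0]

theorem eq_swap_smul_symm (h : v = swap (u 0) (v 0) • u) : u = swap (v 0) (u 0) • v := by
  calc u = swap (u 0) (v 0) • swap (u 0) (v 0) • u := by rw [smul_smul, swap_mul_self, one_smul]
    _ = swap (v 0) (u 0) • v := by rw [← h, swap_comm]

theorem nkStar_adj_swap_smul {a : Fin n} (ha : a ≠ u 0) :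
    (nkStar n k).Adj u (swap (u 0) a • u) := by
  have hv0 : (swap (u 0) a • u) 0 = a := swap_apply_left _ _
  refine fromRel_adj _ _ _ |>.2 ⟨fun h => ha (by rw [← hv0, ← h]), Or.inl ?_⟩
  by_cases hau : a ∈ Set.range u
  · obtain ⟨i, rfl⟩ := hau
    have hi : i ≠ 0 := by rintro rfl; exact ha rfl
    refine Or.inl ⟨i, hi, hv0, swap_apply_right _ _, fun j hj0 hji => ?_⟩
    exact swap_apply_of_ne_of_ne (u.injective.ne hj0) (u.injective.ne hji)
  · refine Or.inr ⟨fun j hj0 => ?_, fun j h => hau ⟨j, by rw [← hv0, h]⟩⟩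
    exact swap_apply_of_ne_of_ne (u.injective.ne hj0) fun h => hau ⟨j, h⟩

theorem nkStar_adj_iff : (nkStar n k).Adj u v ↔ v 0 ≠ u 0 ∧ v = swap (u 0) (v 0) • u := by
  constructor
  · rw [nkStar, fromRel_adj]
    rintro ⟨huv, h⟩
    have hv : v = swap (u 0) (v 0) • u := by
      rcases h with (h | h) | (h | h)
      · exact h.eq_swap_smul
      · exact h.eq_swap_smul
      · exact eq_swap_smul_symm h.eq_swap_smul
      · exact eq_swap_smul_symm h.eq_swap_smul
    refine ⟨fun h0 => huv ?_, hv⟩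
    rw [hv, h0, swap_self, ← Perm.one_def, one_smul]
  · rintro ⟨h0, hv⟩
    rw [hv]
    exact nkStar_adj_swap_smul h0

end nkStar

section prefixMap

variable {n k : ℕ} (hkn : k ≤ n)

theorem prefixMap_eq_smul (p : Perm (Fin n)) : prefixMap n k hkn p = p • Fin.castLEEmb hkn := rfl

theorem prefixMap_mul (σ p : Perm (Fin n)) :
    prefixMap n k hkn (σ * p) = σ • prefixMap n k hkn p := by
  simp only [prefixMap_eq_smul, mul_smul]

theorem prefixMap_apply_zero [NeZero n] [NeZero k] (p : Perm (Fin n)) :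
    prefixMap n k hkn p 0 = p 0 :=
  congrArg p (Fin.ext (by simp))

theorem prefixMap_surjective : Surjective (prefixMap n k hkn) := fun u =>
  Perm.exists_smul_eq_embedding _ u

theorem card_prefixMap_preimage (u : Fin k ↪ Fin n) :
    Nat.card (prefixMap n k hkn ⁻¹' {u}) = (n - k).factorial := by
  have := Perm.card_smul_embedding_eq (Fin.castLEEmb hkn) u
  rwa [Nat.card_fin, Nat.card_fin] at this

variable [NeZero n] [NeZero k] {x y : Perm (Fin n)}

theorem prefixMap_ne_of_adj (h : (_root_.starGraph n).Adj x y) :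
    prefixMap n k hkn x ≠ prefixMap n k hkn y := fun hxy =>
  (starGraph_adj_iff.1 h).1 (by rw [← prefixMap_apply_zero hkn, ← prefixMap_apply_zero hkn, hxy])

theorem nkStar_adj_prefixMap_of_adj (h : (_root_.starGraph n).Adj x y) :
    (nkStar n k).Adj (prefixMap n k hkn x) (prefixMap n k hkn y) := by
  obtain ⟨h0, hy⟩ := starGraph_adj_iff.1 h
  have hπy : prefixMap n k hkn y =
      swap (prefixMap n k hkn x 0) (y 0) • prefixMap n k hkn x := by
    rw [prefixMap_apply_zero, ← prefixMap_mul, ← hy]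
  rw [hπy]
  exact nkStar_adj_swap_smul (by rwa [prefixMap_apply_zero])

theorem existsUnique_adj_prefixMap_eq {v : Fin k ↪ Fin n}
    (h : (nkStar n k).Adj (prefixMap n k hkn x) v) :
    ∃! z, prefixMap n k hkn z = v ∧ (_root_.starGraph n).Adj x z := by
  obtain ⟨h0, hv⟩ := nkStar_adj_iff.1 h
  rw [prefixMap_apply_zero] at h0 hv
  have hz0 : (swap (x 0) (v 0) * x) 0 = v 0 := swap_apply_left _ _
  refine ⟨swap (x 0) (v 0) * x, ⟨by rw [prefixMap_mul, ← hv], ?_⟩, ?_⟩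
  · exact starGraph_adj_iff.2 ⟨by rwa [hz0], by rw [hz0]⟩
  · rintro z ⟨hz, hxz⟩
    have hz0' : z 0 = v 0 := by rw [← prefixMap_apply_zero hkn, hz]
    rw [(starGraph_adj_iff.1 hxz).2, hz0']

end prefixMap

/-- the prefix map exhibits the star graph `S_n` as an
(n-k)!-split graph of `S_{n,k}`, and it is onto. -/
theorem star_is_split_of_nkStar (n k : ℕ) (hk2 : 2 ≤ k) (hk : k ≤ n - 1) :
    IsSplitGraph (@nkStar n k ⟨by omega⟩) ((n - k).factorial)
      (@starGraph n ⟨by omega⟩) (prefixMap n k (by omega)) ∧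
    Function.Surjective (prefixMap n k (by omega)) := by
  have hkn : k ≤ n := by omega
  have : NeZero n := ⟨by omega⟩
  have : NeZero k := ⟨by omega⟩
  exact ⟨⟨card_prefixMap_preimage hkn, fun _ _ hxy h => prefixMap_ne_of_adj hkn h hxy,
    fun _ _ => nkStar_adj_prefixMap_of_adj hkn, fun _ _ => existsUnique_adj_prefixMap_eq hkn⟩,
    prefixMap_surjective hkn⟩
end

section
/- Let n−k ≤ h ≤ n−2 and 2 ≤ k ≤ n−1, and let X be the set of k-arrangements of {1,...,n} whose last n−1−h digits are 1,2,...,(n−1−h) in order. Then every neighbor in S_{n,k} of a vertex of X that lies outside X is a swap-neighbor, no two distinct vertices of X share a common neighbor outside X, and each vertex of X has exactly n−1−h neighbors outside X. Consequently the set T of neighbors of X outside X satisfies |T| = (h+1)!(n−1−h)/(n−k)!. -/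
open SimpleGraph

/-!
Write `m = n - 1 - h`. A vertex `u ∈ X` carries the symbols `< m` in its last `m` positions, so
its first digit is `≥ m` and position `0` is not among the last `m`. An unswap move, or a swap of
position `0` with an earlier position, keeps the last `m` digits; hence the neighbors of `u` outside
`X` are exactly the `m` swaps of position `0` with one of the last `m` positions. Such a neighbor
`v` determines `u`: the swapped position is the only one of the last `m` positions of `v` holding a
symbol `≥ m`, and swapping back recovers `u`. So `T` has `|X| · m` elements, and `X` is in
bijection with the injections of the first `k - m` positions into the `h + 1` symbols `≥ m`.
-/

theorem Fin.ncard_setOf_le_val (k a : ℕ) : {i : Fin k | a ≤ i.val}.ncard = k - a := by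
  rcases lt_or_ge a k with hak | hka
  · have : {i : Fin k | a ≤ i.val} = ↑(Finset.Ici (⟨a, hak⟩ : Fin k)) := by
      ext i
      simp [Fin.le_def]
    rw [this, Set.ncard_coe_finset, Fin.card_Ici]
  · have : {i : Fin k | a ≤ i.val} = ∅ := by
      ext i
      simp only [Set.mem_ofPred_eq, Set.mem_empty_iff_false, iff_false, not_le]
      omega
    rw [this, Set.ncard_empty]
    omega

namespace Function.Embedding

variable {α : Type*} {k : ℕ} [NeZero k]

def swapHead (u : Fin k ↪ α) (i : Fin k) : Fin k ↪ α :=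
  (Equiv.swap 0 i).toEmbedding.trans u

@[simp]
theorem swapHead_apply (u : Fin k ↪ α) (i j : Fin k) : u.swapHead i j = u (Equiv.swap 0 i j) :=
  rfl

@[simp]
theorem swapHead_swapHead (u : Fin k ↪ α) (i : Fin k) : (u.swapHead i).swapHead i = u := by
  ext j
  simp

theorem swapHead_injective (u : Fin k ↪ α) : Function.Injective u.swapHead := by
  intro i i' h
  simpa using congr($h 0)

theorem swapHead_ne_self (u : Fin k ↪ α) {i : Fin k} (hi : i ≠ 0) : u.swapHead i ≠ u := by
  intro h
  exact hi (u.injective (by simpa using congr($h 0)))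

end Function.Embedding

open Function.Embedding

section StarGraph

variable {n k : ℕ} [NeZero k]

theorem swapAdj_iff {p q : Fin k ↪ Fin n} : swapAdj p q ↔ ∃ i ≠ 0, q = p.swapHead i := by
  constructor
  · rintro ⟨i, hi, h0, hi', hother⟩
    refine ⟨i, hi, ?_⟩
    ext1 j
    rcases eq_or_ne j 0 with rfl | hj0
    · simpa using h0
    rcases eq_or_ne j i with rfl | hji
    · simpa using hi'
    · simp [Equiv.swap_apply_of_ne_of_ne hj0 hji, hother j hj0 hji]
  · rintro ⟨i, hi, rfl⟩
    refine ⟨i, hi, by simp, by simp, fun j hj0 hji => ?_⟩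
    simp [Equiv.swap_apply_of_ne_of_ne hj0 hji]

theorem swapAdj_comm {p q : Fin k ↪ Fin n} : swapAdj p q ↔ swapAdj q p := by
  suffices ∀ p q : Fin k ↪ Fin n, swapAdj p q → swapAdj q p from ⟨this p q, this q p⟩
  intro p q
  simp only [swapAdj_iff]
  rintro ⟨i, hi, rfl⟩
  exact ⟨i, hi, (swapHead_swapHead p i).symm⟩

theorem nkStar_adj_swapHead (u : Fin k ↪ Fin n) {i : Fin k} (hi : i ≠ 0) :
    (nkStar n k).Adj u (u.swapHead i) := by
  rw [nkStar, fromRel_adj]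
  exact ⟨(swapHead_ne_self u hi).symm, .inl (.inl (swapAdj_iff.2 ⟨i, hi, rfl⟩))⟩

theorem exists_swapHead_or_forall_ne_zero_of_nkStar_adj {p q : Fin k ↪ Fin n}
    (h : (nkStar n k).Adj p q) :
    (∃ i ≠ 0, q = p.swapHead i) ∨ ∀ j ≠ 0, q j = p j := by
  rw [nkStar, fromRel_adj] at h
  rcases h.2 with (hs | hu) | (hs | hu)
  · exact .inl (swapAdj_iff.1 hs)
  · exact .inr hu.1
  · exact .inl (swapAdj_iff.1 (swapAdj_comm.1 hs))
  · exact .inr fun j hj => (hu.1 j hj).symm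

end StarGraph

def lastPositions (k m : ℕ) : Set (Fin k) := {i | k - m ≤ i.val}

theorem ncard_lastPositions {k m : ℕ} (hm : m ≤ k) : (lastPositions k m).ncard = m := by
  rw [lastPositions, Fin.ncard_setOf_le_val]
  omega

theorem zero_notMem_lastPositions {k m : ℕ} [NeZero k] (hm : m < k) :
    (0 : Fin k) ∉ lastPositions k m := by
  simp only [lastPositions, Set.mem_ofPred_eq, Fin.val_zero, not_le]
  omega

section LastFixed

variable {n k h : ℕ}

theorem le_apply_of_mem_lastFixed {u : Fin k ↪ Fin n} (hu : u ∈ lastFixed n k h) {j : Fin k}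
    (hj : j.val < k - (n - 1 - h)) : n - 1 - h ≤ (u j).val := by
  by_contra! hlt
  let p : Fin k := ⟨k - (n - 1 - h) + (u j).val, by omega⟩
  have hp : u p = u j := Fin.ext ((hu p (Nat.le_add_right _ _)).trans (by simp [p]))
  have : k - (n - 1 - h) + (u j).val = j.val := congrArg Fin.val (u.injective hp)
  omega

variable [NeZero k]

theorem le_apply_zero_of_mem_lastFixed (hk : n - 1 - h < k) {u : Fin k ↪ Fin n}
    (hu : u ∈ lastFixed n k h) : n - 1 - h ≤ (u 0).val :=
  le_apply_of_mem_lastFixed hu (Nat.sub_pos_of_lt hk)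

theorem swapHead_mem_lastFixed_iff (hk : n - 1 - h < k) {u : Fin k ↪ Fin n}
    (hu : u ∈ lastFixed n k h) {i : Fin k} :
    u.swapHead i ∈ lastFixed n k h ↔ i ∉ lastPositions k (n - 1 - h) := by
  constructor
  · intro hmem hi
    have hval := hmem i hi
    rw [swapHead_apply, Equiv.swap_apply_right] at hval
    have := le_apply_zero_of_mem_lastFixed hk hu
    have : k - (n - 1 - h) ≤ i.val := hi
    omega
  · intro hi j hj
    have hj0 : j ≠ 0 := ne_of_mem_of_not_mem hj (zero_notMem_lastPositions hk)
    have hji : j ≠ i := by rintro rfl; exact hi hj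
    rw [swapHead_apply, Equiv.swap_apply_of_ne_of_ne hj0 hji]
    exact hu j hj

theorem neighborSet_diff_lastFixed (hk : n - 1 - h < k) {u : Fin k ↪ Fin n}
    (hu : u ∈ lastFixed n k h) :
    (nkStar n k).neighborSet u \ lastFixed n k h = u.swapHead '' lastPositions k (n - 1 - h) := by
  ext v
  constructor
  · rintro ⟨hadj, hv⟩
    rcases exists_swapHead_or_forall_ne_zero_of_nkStar_adj hadj with ⟨i, -, rfl⟩ | hoff
    · exact ⟨i, not_not.1 fun hi => hv ((swapHead_mem_lastFixed_iff hk hu).2 hi), rfl⟩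
    · refine absurd (fun j hj => ?_) hv
      rw [hoff j (ne_of_mem_of_not_mem hj (zero_notMem_lastPositions hk))]
      exact hu j hj
  · rintro ⟨i, hi, rfl⟩
    exact ⟨nkStar_adj_swapHead u (ne_of_mem_of_not_mem hi (zero_notMem_lastPositions hk)),
      fun hmem => (swapHead_mem_lastFixed_iff hk hu).1 hmem hi⟩

theorem injOn_swapHead_lastFixed (hk : n - 1 - h < k) :
    Set.InjOn (fun p : (Fin k ↪ Fin n) × Fin k => p.1.swapHead p.2)
      (lastFixed n k h ×ˢ lastPositions k (n - 1 - h)) := by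
  rintro ⟨u₁, i₁⟩ ⟨hu₁ : u₁ ∈ lastFixed n k h, -⟩ ⟨u₂, i₂⟩
    ⟨hu₂ : u₂ ∈ lastFixed n k h, hi₂ : k - (n - 1 - h) ≤ i₂.val⟩ heq
  simp only at heq
  suffices hi : i₁ = i₂ by
    subst hi
    rw [← swapHead_swapHead u₁ i₁, heq, swapHead_swapHead]
  by_contra hne
  have htail := congr($heq i₂)
  rw [swapHead_apply, swapHead_apply, Equiv.swap_apply_right, Equiv.swap_apply_of_ne_of_ne
    (ne_of_mem_of_not_mem hi₂ (zero_notMem_lastPositions hk)) (Ne.symm hne)] at htail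
  have := hu₁ i₂ hi₂
  have := le_apply_zero_of_mem_lastFixed hk hu₂
  omega

theorem exists_swapHead_eq_of_adj (hk : n - 1 - h < k) {u v : Fin k ↪ Fin n}
    (hu : u ∈ lastFixed n k h) (hv : v ∉ lastFixed n k h) (hadj : (nkStar n k).Adj u v) :
    ∃ i ∈ lastPositions k (n - 1 - h), u.swapHead i = v :=
  show v ∈ u.swapHead '' _ from neighborSet_diff_lastFixed hk hu ▸ ⟨hadj, hv⟩

theorem outsideNeighbors_lastFixed_eq_image (hk : n - 1 - h < k) :
    {v | v ∉ lastFixed n k h ∧ ∃ u ∈ lastFixed n k h, (nkStar n k).Adj u v} =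
      (fun p => p.1.swapHead p.2) '' (lastFixed n k h ×ˢ lastPositions k (n - 1 - h)) := by
  ext v
  constructor
  · rintro ⟨hv, u, hu, hadj⟩
    obtain ⟨i, hi, rfl⟩ := exists_swapHead_eq_of_adj hk hu hv hadj
    exact ⟨(u, i), ⟨hu, hi⟩, rfl⟩
  · rintro ⟨⟨u, i⟩, ⟨hu, hi⟩, rfl⟩
    have hv := (neighborSet_diff_lastFixed hk hu).symm ▸ Set.mem_image_of_mem _ hi
    exact ⟨hv.2, u, hu, hv.1⟩

end LastFixed

section Count

variable {n k : ℕ}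

def withTail {m : ℕ} (hm : m ≤ n) (f : Fin (k - m) ↪ {x : Fin n | m ≤ x.val}) :
    Fin k ↪ Fin n where
  toFun j := if hj : j.val < k - m then f ⟨j, hj⟩ else ⟨j - (k - m), by omega⟩
  inj' a b hab := by
    have hf (i) : m ≤ (f i).1.val := (f i).2
    have hval := congrArg Fin.val hab
    dsimp only at hval
    split_ifs at hval with ha hb hb
    · simpa [Fin.ext_iff] using f.injective (Subtype.ext (Fin.ext hval))
    all_goals grind

theorem val_withTail_of_lt {m : ℕ} (hm : m ≤ n) (f : Fin (k - m) ↪ {x : Fin n | m ≤ x.val})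
    {j : Fin k} (hj : j.val < k - m) : (withTail hm f j).val = (f ⟨j, hj⟩).1.val :=
  congrArg Fin.val (dif_pos hj)

theorem val_withTail_of_le {m : ℕ} (hm : m ≤ n) (f : Fin (k - m) ↪ {x : Fin n | m ≤ x.val})
    {j : Fin k} (hj : k - m ≤ j.val) : (withTail hm f j).val = j - (k - m) := by
  simp [withTail, not_lt.2 hj]

variable {h : ℕ}

def lastFixedEquiv :
    lastFixed n k h ≃ (Fin (k - (n - 1 - h)) ↪ {x : Fin n | n - 1 - h ≤ x.val}) where
  toFun u := ((Fin.castLEEmb (Nat.sub_le _ _)).trans u.1).codRestrict _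
    fun j => le_apply_of_mem_lastFixed u.2 j.2
  invFun f := ⟨withTail (by omega) f, fun _ hj => val_withTail_of_le _ f hj⟩
  left_inv u := by
    ext j
    rcases lt_or_ge j.val (k - (n - 1 - h)) with hj | hj
    · rw [val_withTail_of_lt _ _ hj]
      rfl
    · rw [val_withTail_of_le _ _ hj, u.2 j hj]
  right_inv f := by
    ext j
    exact val_withTail_of_lt (by omega) f (j := Fin.castLE (Nat.sub_le _ _) j) j.2

theorem ncard_lastFixed :
    (lastFixed n k h).ncard = (n - (n - 1 - h)).descFactorial (k - (n - 1 - h)) := by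
  rw [← Nat.card_coe_set_eq, Nat.card_congr lastFixedEquiv, Nat.card_eq_fintype_card,
    Fintype.card_embedding_eq, Fintype.card_fin, ← Nat.card_eq_fintype_card,
    Nat.card_coe_set_eq, Fin.ncard_setOf_le_val]

end Count

/-- all outside neighbors of `X` are swap-neighbors, no two
vertices of `X` share an outside neighbor, each vertex of `X` has exactly
n-1-h outside neighbors, and hence |T| = (h+1)!(n-1-h)/(n-k)!. -/
theorem lastFixed_outside_neighbors (n k h : ℕ) (hk2 : 2 ≤ k) (hk : k ≤ n - 1)
    (h1 : n - k ≤ h) (h2 : h ≤ n - 2) :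
    (∀ u ∈ lastFixed n k h, ∀ v, v ∉ lastFixed n k h →
        (@nkStar n k ⟨by omega⟩).Adj u v → @swapAdj n k ⟨by omega⟩ u v) ∧
    (∀ u₁ ∈ lastFixed n k h, ∀ u₂ ∈ lastFixed n k h, u₁ ≠ u₂ →
        ∀ v, v ∉ lastFixed n k h →
          ¬ ((@nkStar n k ⟨by omega⟩).Adj u₁ v ∧ (@nkStar n k ⟨by omega⟩).Adj u₂ v)) ∧
    (∀ u ∈ lastFixed n k h,
        ((@nkStar n k ⟨by omega⟩).neighborSet u \ lastFixed n k h).ncard = n - 1 - h) ∧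
    {v | v ∉ lastFixed n k h ∧
        ∃ u ∈ lastFixed n k h, (@nkStar n k ⟨by omega⟩).Adj u v}.ncard
      = (h + 1).factorial * (n - 1 - h) / (n - k).factorial := by
  have : NeZero k := ⟨by omega⟩
  have hk0 : n - 1 - h < k := by omega
  refine ⟨fun u hu v hv hadj => ?_, fun u₁ hu₁ u₂ hu₂ hne v hv ⟨hadj₁, hadj₂⟩ => ?_,
    fun u hu => ?_, ?_⟩
  · obtain ⟨i, hi, rfl⟩ := exists_swapHead_eq_of_adj hk0 hu hv hadj
    exact swapAdj_iff.2 ⟨i, ne_of_mem_of_not_mem hi (zero_notMem_lastPositions hk0), rfl⟩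
  · obtain ⟨i₁, hi₁, rfl⟩ := exists_swapHead_eq_of_adj hk0 hu₁ hv hadj₁
    obtain ⟨i₂, hi₂, heq⟩ := exists_swapHead_eq_of_adj hk0 hu₂ hv hadj₂
    exact hne (congrArg Prod.fst (injOn_swapHead_lastFixed hk0
      (Set.mk_mem_prod hu₁ hi₁) (Set.mk_mem_prod hu₂ hi₂) heq.symm))
  · rw [neighborSet_diff_lastFixed hk0 hu, (swapHead_injective u).injOn.ncard_image,
      ncard_lastPositions hk0.le]
  · rw [outsideNeighbors_lastFixed_eq_image hk0, (injOn_swapHead_lastFixed hk0).ncard_image,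
      Set.ncard_prod, ncard_lastFixed, ncard_lastPositions hk0.le,
      show n - (n - 1 - h) = h + 1 by omega, Nat.descFactorial_eq_div (by omega),
      show h + 1 - (k - (n - 1 - h)) = n - k by omega,
      Nat.div_mul_right_comm (Nat.factorial_dvd_factorial (by omega))]
end

section
/- The (n,k)-star graph S_{n,k} is vertex-transitive for 1 ≤ k ≤ n−1: for any two vertices u, v of S_{n,k} there is a graph automorphism of S_{n,k} mapping u to v. -/
open SimpleGraph

section SymbolPermutation

variable {n k : ℕ} [NeZero k] (σ : Equiv.Perm (Fin n)) {p q : Fin k ↪ Fin n}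

lemma swapAdj_smul_iff : swapAdj (σ • p) (σ • q) ↔ swapAdj p q := by
  simp [swapAdj, Function.Embedding.smul_apply]

lemma unswapAdj_smul_iff : unswapAdj (σ • p) (σ • q) ↔ unswapAdj p q := by
  simp [unswapAdj, Function.Embedding.smul_apply]

def nkStar.relabel : nkStar n k ≃g nkStar n k where
  toEquiv := MulAction.toPerm σ
  map_rel_iff' := by
    simp [nkStar, swapAdj_smul_iff, unswapAdj_smul_iff]

end SymbolPermutation

/-- `S_{n,k}` is vertex-transitive for 1 ≤ k ≤ n-1. -/
theorem nkStar_vertex_transitive (n k : ℕ) (hk1 : 1 ≤ k)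
    (u v : Fin k ↪ Fin n) :
    ∃ φ : @nkStar n k ⟨by omega⟩ ≃g @nkStar n k ⟨by omega⟩, φ u = v := by
  have : NeZero k := ⟨by omega⟩
  obtain ⟨σ, hσ⟩ := Equiv.Perm.exists_extending_pair u v u.injective v.injective
  exact ⟨nkStar.relabel σ, DFunLike.ext _ _ hσ⟩
end
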